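/- Let f: ℝ → ℝ be admissible, i.e. f ∈ L¹(ℝ) ∩ L²(ℝ), ‖f‖_{L¹} = 1, f is even and real-valued, f(0) = 0, and f = f̂. Set A = A(f) and suppose A ≤ 1/2. Then ∫₀^A f⁺(x) dx ≤ ∫_{1/4}^{A} [ 1/2 + ( sin(2π(A − 1/4)x) − sin(2πAx) )/(πx) ] dx, where f⁺ = max{f, 0} denotes the positive part of f. -/

import Mathlib

/-!
Let `E = {x ∈ (0, A] | f x > 0}` and `m = |E|`. Since `f = 𝓕 f`, `∫ f = f 0 = 0` and
`|f| ≤ ‖f‖₁ = 1`. Hence `f⁺` and `f⁻` both have mass `1/2`, and as `f⁻ ≤ 1` is even and vanishes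
beyond `A` and on `E`, it has mass `1/4` on `(0, A]`, which forces `m + 1/4 ≤ A`. Writing `f` as its
own cosine transform gives `∫_E f = ∫ f K_E`, where `K_E t = ∫_E cos (2π x t) ≤ m`. Because
`A ≤ 1/2`, every product `x t` lies in `[0, 1/4]`, where `cos (2π ·)` decreases, so the bathtub
principle applies twice: it bounds `∫_(0,A] f⁻ K_E` below by `∫_(A-1/4,A] K_E`, and `K_E` below by
`K_(A-m,A]`. The resulting bound for `∫_E f` is nondecreasing in `m`, and at the largest value
`m = A - 1/4` it is the right-hand side of the claim.
-/

open MeasureTheory Real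
open scoped FourierTransform

/-- `A(g)`: the infimum of all `r > 0` such that `g x ≥ 0` for all `|x| > r`,
with the convention that the infimum of the empty set is `+∞`. -/
noncomputable def sgnRadius (g : ℝ → ℝ) : ENNReal :=
  sInf (ENNReal.ofReal '' {r : ℝ | 0 < r ∧ ∀ x : ℝ, r < |x| → 0 ≤ g x})

open Set

lemma nonneg_of_sgnRadius_lt {g : ℝ → ℝ} {x : ℝ} (h : sgnRadius g < ENNReal.ofReal |x|) :
    0 ≤ g x := by
  obtain ⟨_, ⟨r, ⟨-, hr⟩, rfl⟩, hrx⟩ := sInf_lt_iff.1 h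
  exact hr x (ENNReal.ofReal_lt_ofReal_iff'.1 hrx).1

lemma integral_eq_two_mul_setIntegral_Ioc_of_even {g : ℝ → ℝ} {A : ℝ}
    (heven : ∀ x, g (-x) = g x) (hsupp : ∀ x, A < x → g x = 0) :
    ∫ x, g x = 2 * ∫ x in Ioc 0 A, g x := by
  calc ∫ x, g x = ∫ x, g |x| := by
        congr 1 with x
        rcases abs_choice x with h | h <;> rw [h]
        exact (heven x).symm
    _ = 2 * ∫ x in Ioi 0, g x := integral_comp_abs
    _ = 2 * ∫ x in Ioc 0 A, g x := by
        rw [setIntegral_eq_of_subset_of_forall_sdiff_eq_zero measurableSet_Ioi Ioc_subset_Ioi_self]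
        rintro x ⟨hx0, hxA⟩
        exact hsupp x (lt_of_not_ge fun h => hxA ⟨hx0, h⟩)

lemma intervalIntegral_max_zero_eq_setIntegral {f : ℝ → ℝ} {a b : ℝ} (hf : Measurable f)
    (hab : a ≤ b) : ∫ x in a..b, max (f x) 0 = ∫ x in {x ∈ Ioc a b | 0 < f x}, f x := by
  rw [intervalIntegral.integral_of_le hab, setIntegral_eq_of_subset_of_forall_sdiff_eq_zero
    measurableSet_Ioc (sep_subset _ _) fun x hx => max_eq_right (not_lt.1 fun h => hx.2 ⟨hx.1, h⟩)]
  exact setIntegral_congr_fun (measurableSet_Ioc.inter (measurableSet_lt measurable_const hf))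
    fun x hx => max_eq_left hx.2.le

lemma max_neg_zero_mem_Icc {a : ℝ} (ha : -1 ≤ a) : max (-a) 0 ∈ Icc (0 : ℝ) 1 :=
  ⟨le_max_right _ _, max_le (by linarith) zero_le_one⟩

section

variable {α : Type*} [MeasurableSpace α] {μ : Measure α} {f : α → ℝ}

lemma integral_max_zero_eq_half_of_integral_eq_zero (hf : Integrable f μ)
    (h0 : ∫ x, f x ∂μ = 0) : ∫ x, max (f x) 0 ∂μ = (∫ x, |f x| ∂μ) / 2 := by
  have h (x : α) : max (f x) 0 = (|f x| + f x) / 2 := by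
    linarith [max_zero_add_max_neg_zero_eq_abs_self (f x), max_zero_sub_eq_self (f x)]
  simp_rw [h]
  rw [integral_div, integral_add hf.abs hf, h0, add_zero]

lemma integral_max_neg_zero_eq_half_of_integral_eq_zero (hf : Integrable f μ)
    (h0 : ∫ x, f x ∂μ = 0) : ∫ x, max (-f x) 0 ∂μ = (∫ x, |f x| ∂μ) / 2 := by
  simpa using integral_max_zero_eq_half_of_integral_eq_zero hf.neg
    (by simp only [Pi.neg_apply, integral_neg, h0, neg_zero])

lemma measureReal_add_setIntegral_le {s t : Set α} (hs : MeasurableSet s) (ht : MeasurableSet t)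
    (hts : t ⊆ s) (hs' : μ s ≠ ⊤) (hf : ∀ x ∈ s, f x ∈ Icc 0 1) (hft : ∀ x ∈ t, f x = 0) :
    μ.real t + ∫ x in s, f x ∂μ ≤ μ.real s := by
  rw [setIntegral_eq_of_subset_of_forall_sdiff_eq_zero hs sdiff_subset
    fun x hx => hft x (not_not.1 fun h => hx.2 ⟨hx.1, h⟩)]
  have hst : ∫ x in s \ t, f x ∂μ ≤ 1 * μ.real (s \ t) :=
    (le_norm_self _).trans <| norm_setIntegral_le_of_norm_le_const
      ((measure_mono sdiff_subset).trans_lt hs'.lt_top) fun x hx =>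
        (abs_of_nonneg (hf x hx.1).1).trans_le (hf x hx.1).2
  rw [measureReal_sdiff hts ht hs'] at hst
  linarith

end

lemma setIntegral_Ioc_le_setIntegral_mul_of_antitoneOn {a b c : ℝ} {g k : ℝ → ℝ}
    (hc : 0 ≤ c) (hcab : c ≤ b - a) (hgm : AEStronglyMeasurable g (volume.restrict (Ioc a b)))
    (hg : ∀ x ∈ Ioc a b, g x ∈ Icc 0 1) (hgint : ∫ x in Ioc a b, g x = c)
    (hk : AntitoneOn k (Icc a b)) :
    ∫ x in Ioc (b - c) b, k x ≤ ∫ x in Ioc a b, g x * k x := by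
  set θ := b - c
  have hθ : θ ∈ Icc a b := ⟨by linarith, by linarith⟩
  have hsub : Ioc θ b ⊆ Ioc a b := Ioc_subset_Ioc_left hθ.1
  have hg1 : ∀ᵐ x ∂volume.restrict (Ioc a b), ‖g x‖ ≤ 1 :=
    (ae_restrict_iff' measurableSet_Ioc).2 <| .of_forall fun x hx =>
      (abs_of_nonneg (hg x hx).1).trans_le (hg x hx).2
  have hkI : IntegrableOn k (Ioc a b) :=
    (hk.integrableOn_isCompact isCompact_Icc).mono_set Ioc_subset_Icc_self
  have hgI : IntegrableOn g (Ioc a b) :=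
    Integrable.mono' (integrableOn_const (C := (1 : ℝ)) (by simp)) hgm hg1
  have hgkI : IntegrableOn (fun x => g x * k x) (Ioc a b) := hkI.bdd_mul hgm hg1
  have hkθI : IntegrableOn ((Ioc θ b).indicator k) (Ioc a b) := hkI.indicator measurableSet_Ioc
  have hoI : IntegrableOn ((Ioc θ b).indicator 1) (Ioc a b) :=
    (integrableOn_const (C := (1 : ℝ)) (by simp)).indicator measurableSet_Ioc
  have hind : ∫ x in Ioc a b, (Ioc θ b).indicator 1 x = c := by
    rw [setIntegral_indicator measurableSet_Ioc, inter_eq_self_of_subset_right hsub]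
    simp [volume_real_Ioc_of_le hθ.2, θ]
  -- pointwise `1_(θ,b] k - g k ≤ (1_(θ,b] - g) k θ`, and the right-hand side integrates to `0`
  have key : ∫ x in Ioc a b, ((Ioc θ b).indicator k x - g x * k x)
      ≤ ∫ x in Ioc a b, ((Ioc θ b).indicator 1 x - g x) * k θ := by
    refine setIntegral_mono_on (hkθI.sub hgkI) ((hoI.sub hgI).mul_const _) measurableSet_Ioc
      fun x hx => ?_
    by_cases hxθ : x ∈ Ioc θ b
    · simp only [indicator_of_mem hxθ, Pi.one_apply]
      nlinarith [hk hθ (Ioc_subset_Icc_self (hsub hxθ)) hxθ.1.le, (hg x hx).2]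
    · have hxθ' : x ≤ θ := le_of_not_gt fun h => hxθ ⟨h, hx.2⟩
      simp only [indicator_of_notMem hxθ, zero_sub]
      nlinarith [hk (Ioc_subset_Icc_self hx) hθ hxθ', (hg x hx).1]
  rw [integral_mul_const, integral_sub hoI hgI, hind, hgint, integral_sub hkθI hgkI,
    setIntegral_indicator measurableSet_Ioc, inter_eq_self_of_subset_right hsub] at key
  linarith

lemma antitoneOn_cos_two_pi_mul_mul {t : ℝ} (ht : t ∈ Icc (0 : ℝ) (1 / 2)) :
    AntitoneOn (fun x => cos (2 * π * (x * t))) (Icc 0 (1 / 2)) := by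
  intro x hx y hy hxy
  have hyt : y * t ≤ 1 / 2 := by nlinarith [hy.1, hy.2, ht.1, ht.2]
  apply cos_le_cos_of_nonneg_of_le_pi
  · have := mul_nonneg hx.1 ht.1
    positivity
  · nlinarith [pi_pos]
  · gcongr
    exact ht.1

noncomputable def cosKernel (S : Set ℝ) (t : ℝ) : ℝ :=
  ∫ x in S, cos (2 * π * (x * t))

section CosKernel

variable {S T : Set ℝ}

lemma integrableOn_cos_two_pi_mul_mul (hS : volume S ≠ ⊤) (t : ℝ) :
    IntegrableOn (fun x => cos (2 * π * (x * t))) S :=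
  Integrable.mono' (integrableOn_const hS) (by fun_prop : Continuous _).aestronglyMeasurable
    (.of_forall fun _ => abs_cos_le_one _)

lemma continuous_cosKernel (hS : volume S ≠ ⊤) : Continuous (cosKernel S) := by
  have : IsFiniteMeasure (volume.restrict S) := ⟨by simpa using hS.lt_top⟩
  exact continuous_of_dominated (fun _ => (by fun_prop : Continuous _).aestronglyMeasurable)
    (fun _ => .of_forall fun _ => abs_cos_le_one _) (integrable_const 1)
    (.of_forall fun _ => by fun_prop)

lemma abs_cosKernel_le (hS : volume S ≠ ⊤) (t : ℝ) : |cosKernel S t| ≤ volume.real S := by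
  simpa [cosKernel] using norm_setIntegral_le_of_norm_le_const (C := 1) hS.lt_top
    (f := fun x => cos (2 * π * (x * t))) fun x _ => abs_cos_le_one _

lemma cosKernel_le (hS : volume S ≠ ⊤) (t : ℝ) : cosKernel S t ≤ volume.real S :=
  (le_abs_self _).trans (abs_cosKernel_le hS t)

lemma cosKernel_neg (t : ℝ) : cosKernel S (-t) = cosKernel S t := by
  simp only [cosKernel, mul_neg, cos_neg]

lemma cosKernel_union (hST : Disjoint S T) (hT : MeasurableSet T) (hS' : volume S ≠ ⊤)
    (hT' : volume T ≠ ⊤) (t : ℝ) : cosKernel (S ∪ T) t = cosKernel S t + cosKernel T t :=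
  setIntegral_union hST hT (integrableOn_cos_two_pi_mul_mul hS' t)
    (integrableOn_cos_two_pi_mul_mul hT' t)

lemma cosKernel_antitoneOn (hS : MeasurableSet S) (hS' : S ⊆ Icc 0 (1 / 2)) :
    AntitoneOn (cosKernel S) (Icc 0 (1 / 2)) := by
  have hfin : volume S ≠ ⊤ := ((measure_mono hS').trans_lt measure_Icc_lt_top).ne
  intro t ht u hu htu
  refine setIntegral_mono_on (integrableOn_cos_two_pi_mul_mul hfin u)
    (integrableOn_cos_two_pi_mul_mul hfin t) hS fun x hx => ?_
  simpa only [mul_comm x] using antitoneOn_cos_two_pi_mul_mul (hS' hx) ht hu htu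

lemma cosKernel_Ioc {a b x : ℝ} (hab : a ≤ b) (hx : x ≠ 0) :
    cosKernel (Ioc a b) x = (sin (2 * π * b * x) - sin (2 * π * a * x)) / (2 * π * x) := by
  have hc : 2 * π * x ≠ 0 := by positivity
  rw [cosKernel, ← intervalIntegral.integral_of_le hab]
  simp_rw [show ∀ y, 2 * π * (y * x) = 2 * π * x * y by intro y; ring]
  rw [intervalIntegral.integral_comp_mul_left (fun y => cos y) hc, integral_cos, smul_eq_mul]
  field_simp

lemma setIntegral_cosKernel_comm (hS : volume S ≠ ⊤) (hT : volume T ≠ ⊤) :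
    ∫ t in T, cosKernel S t = ∫ x in S, cosKernel T x := by
  have : IsFiniteMeasure (volume.restrict S) := ⟨by simpa using hS.lt_top⟩
  have : IsFiniteMeasure (volume.restrict T) := ⟨by simpa using hT.lt_top⟩
  have hint : Integrable (fun p : ℝ × ℝ => cos (2 * π * (p.2 * p.1)))
      ((volume.restrict T).prod (volume.restrict S)) :=
    Integrable.mono' (integrable_const 1) (by fun_prop : Continuous _).aestronglyMeasurable
      (.of_forall fun _ => abs_cos_le_one _)
  simp only [cosKernel]
  rw [integral_integral_swap (f := fun t x => cos (2 * π * (x * t))) hint]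
  simp only [mul_comm]

lemma integrableOn_cosKernel (hS : volume S ≠ ⊤) (hT : volume T ≠ ⊤) :
    IntegrableOn (cosKernel S) T :=
  Integrable.mono' (integrableOn_const hT) (continuous_cosKernel hS).aestronglyMeasurable
    (.of_forall (abs_cosKernel_le hS))

lemma cosKernel_Ioc_le_cosKernel {b t : ℝ} (hS : MeasurableSet S) (hSb : S ⊆ Ioc 0 b)
    (hb0 : 0 ≤ b) (hb : b ≤ 1 / 2) (ht : t ∈ Icc (0 : ℝ) (1 / 2)) :
    cosKernel (Ioc (b - volume.real S) b) t ≤ cosKernel S t := by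
  have hSb' : volume.real S ≤ b - 0 :=
    (measureReal_mono hSb measure_Ioc_lt_top.ne).trans_eq (volume_real_Ioc_of_le hb0)
  have h := setIntegral_Ioc_le_setIntegral_mul_of_antitoneOn measureReal_nonneg hSb'
    (measurable_const.indicator hS).aestronglyMeasurable
    (fun x _ => ⟨indicator_nonneg (fun _ _ => zero_le_one) x,
      indicator_le_self' (fun _ _ => zero_le_one) x⟩)
    (by rw [setIntegral_indicator hS, inter_eq_self_of_subset_right hSb]; simp)
    ((antitoneOn_cos_two_pi_mul_mul ht).mono (Icc_subset_Icc_right hb))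
  refine h.trans_eq ?_
  conv_rhs => rw [cosKernel, ← inter_eq_self_of_subset_right hSb, ← setIntegral_indicator hS]
  congr 1 with x
  by_cases hx : x ∈ S <;> simp [hx]

lemma setIntegral_cosKernel_Ioc_le {a b c : ℝ} (hac : a ≤ c) (hcb : c ≤ b) (hT : volume T ≠ ⊤) :
    ∫ t in T, cosKernel (Ioc a b) t
      ≤ (∫ t in T, cosKernel (Ioc c b) t) + (c - a) * volume.real T := by
  have hsplit (t : ℝ) : cosKernel (Ioc a b) t = cosKernel (Ioc a c) t + cosKernel (Ioc c b) t := by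
    rw [← cosKernel_union (Ioc_disjoint_Ioc_of_le le_rfl) measurableSet_Ioc measure_Ioc_lt_top.ne
      measure_Ioc_lt_top.ne, Ioc_union_Ioc_eq_Ioc hac hcb]
  have hac' : ∫ t in T, cosKernel (Ioc a c) t ≤ (c - a) * volume.real T := by
    refine (le_norm_self _).trans (norm_setIntegral_le_of_norm_le_const hT.lt_top fun t _ => ?_)
    exact (abs_cosKernel_le measure_Ioc_lt_top.ne t).trans_eq (volume_real_Ioc_of_le hac)
  simp_rw [hsplit]
  rw [integral_add (integrableOn_cosKernel measure_Ioc_lt_top.ne hT)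
    (integrableOn_cosKernel measure_Ioc_lt_top.ne hT)]
  linarith

lemma intervalIntegral_add_sin_sub_sin_div {a b c d : ℝ} (r : ℝ) (ha : 0 < a) (hab : a ≤ b)
    (hcd : c ≤ d) :
    ∫ x in a..b, (r + (sin (2 * π * c * x) - sin (2 * π * d * x)) / (π * x))
      = r * (b - a) - 2 * ∫ t in Ioc c d, cosKernel (Ioc a b) t := by
  have hpt : ∀ x ∈ Ioc a b, r + (sin (2 * π * c * x) - sin (2 * π * d * x)) / (π * x)
      = r - 2 * cosKernel (Ioc c d) x := fun x hx => by
    have hx : x ≠ 0 := (ha.trans hx.1).ne'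
    rw [cosKernel_Ioc hcd hx]
    field_simp
    ring
  rw [intervalIntegral.integral_of_le hab, setIntegral_congr_fun measurableSet_Ioc hpt,
    integral_sub (integrableOn_const (s := Ioc a b) (C := r) measure_Ioc_lt_top.ne)
      ((integrableOn_cosKernel measure_Ioc_lt_top.ne measure_Ioc_lt_top.ne).const_mul 2),
    integral_const_mul, setIntegral_const, volume_real_Ioc_of_le hab, smul_eq_mul,
    setIntegral_cosKernel_comm measure_Ioc_lt_top.ne measure_Ioc_lt_top.ne]
  ring

end CosKernel

noncomputable def posPartBound (A m : ℝ) : ℝ :=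
  m / 2 - 2 * ∫ t in Ioc (A - 1 / 4) A, cosKernel (Ioc (A - m) A) t

lemma posPartBound_mono {A m m' : ℝ} (hm : 0 ≤ m) (hmm' : m ≤ m') :
    posPartBound A m ≤ posPartBound A m' := by
  have h := setIntegral_cosKernel_Ioc_le (T := Ioc (A - 1 / 4) A) (by linarith : A - m' ≤ A - m)
    (by linarith : A - m ≤ A) measure_Ioc_lt_top.ne
  rw [volume_real_Ioc_of_le (by linarith)] at h
  rw [posPartBound, posPartBound]
  linarith

lemma intervalIntegral_eq_posPartBound {A : ℝ} (hA : 1 / 4 ≤ A) :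
    ∫ x in (1 / 4 : ℝ)..A, (1 / 2 + (sin (2 * π * (A - 1 / 4) * x) - sin (2 * π * A * x)) / (π * x))
      = posPartBound A (A - 1 / 4) := by
  rw [intervalIntegral_add_sin_sub_sin_div _ (by norm_num) hA (by linarith), posPartBound,
    sub_sub_cancel]
  ring

section FourierSelfDual

variable {f : ℝ → ℝ}

lemma continuous_of_fourier_eq_self (hf : Integrable f)
    (hself : ∀ x, 𝓕 (fun t : ℝ => (f t : ℂ)) x = f x) : Continuous f := by
  have h : Continuous (𝓕 (fun t : ℝ => (f t : ℂ))) :=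
    VectorFourier.fourierIntegral_continuous continuous_fourierChar continuous_inner hf.ofReal
  convert Complex.continuous_re.comp h
  ext x
  simp [hself]

lemma abs_le_integral_abs_of_fourier_eq_self
    (hself : ∀ x, 𝓕 (fun t : ℝ => (f t : ℂ)) x = f x) (x : ℝ) : |f x| ≤ ∫ t, |f t| := by
  calc |f x| = ‖𝓕 (fun t : ℝ => (f t : ℂ)) x‖ := by simp [hself]
    _ ≤ ∫ t, ‖(f t : ℂ)‖ := VectorFourier.norm_fourierIntegral_le_integral_norm _ _ _ _ _
    _ = ∫ t, |f t| := by simp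

lemma eq_integral_mul_cos_of_fourier_eq_self (hf : Integrable f)
    (hself : ∀ x, 𝓕 (fun t : ℝ => (f t : ℂ)) x = f x) (x : ℝ) :
    f x = ∫ t, f t * cos (2 * π * (t * x)) := by
  have hexp : Integrable fun t : ℝ => Complex.exp (↑(-2 * π * t * x) * Complex.I) • (f t : ℂ) :=
    hf.ofReal.bdd_mul (c := 1) (by fun_prop)
      (.of_forall fun t => (Complex.norm_exp_ofReal_mul_I _).le)
  have h := congrArg Complex.re (hself x)
  rw [fourier_real_eq_integral_exp_smul, ← RCLike.re_to_complex, ← integral_re hexp] at h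
  rw [← Complex.ofReal_re (f x), ← h]
  congr 1 with t
  rw [smul_eq_mul, RCLike.re_to_complex, Complex.re_mul_ofReal, Complex.exp_ofReal_mul_I_re,
    mul_comm, ← cos_neg]
  ring_nf

lemma integral_eq_apply_zero_of_fourier_eq_self (hf : Integrable f)
    (hself : ∀ x, 𝓕 (fun t : ℝ => (f t : ℂ)) x = f x) : ∫ t, f t = f 0 := by
  simp [eq_integral_mul_cos_of_fourier_eq_self hf hself 0]

lemma setIntegral_eq_integral_mul_cosKernel_of_fourier_eq_self (hf : Integrable f)
    (hself : ∀ x, 𝓕 (fun t : ℝ => (f t : ℂ)) x = f x) {S : Set ℝ} (hS : volume S ≠ ⊤) :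
    ∫ x in S, f x = ∫ t, f t * cosKernel S t := by
  have : IsFiniteMeasure (volume.restrict S) := ⟨by simpa using hS.lt_top⟩
  have hint : Integrable (fun p : ℝ × ℝ => cos (2 * π * (p.2 * p.1)) * f p.2)
      ((volume.restrict S).prod volume) :=
    (hf.comp_snd _).bdd_mul (by fun_prop) (.of_forall fun _ => abs_cos_le_one _)
  calc ∫ x in S, f x = ∫ x in S, ∫ t, cos (2 * π * (t * x)) * f t := by
        congr 1 with x
        simp_rw [eq_integral_mul_cos_of_fourier_eq_self hf hself x, mul_comm]
    _ = ∫ t, ∫ x in S, cos (2 * π * (t * x)) * f t :=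
        integral_integral_swap (f := fun x t => cos (2 * π * (t * x)) * f t) hint
    _ = ∫ t, f t * cosKernel S t := by
        congr 1 with t
        simp_rw [integral_mul_const, cosKernel, mul_comm t, mul_comm _ (f t)]

end FourierSelfDual

lemma integral_mul_cosKernel_le {f : ℝ → ℝ} {S : Set ℝ} {A : ℝ} (hf : Integrable f)
    (heven : ∀ x, f (-x) = f x) (hsign : ∀ x, A < x → 0 ≤ f x) (hS : volume S ≠ ⊤) :
    ∫ t, f t * cosKernel S t
      ≤ volume.real S * (∫ t, max (f t) 0) - 2 * ∫ t in Ioc 0 A, max (-f t) 0 * cosKernel S t := by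
  have hK := continuous_cosKernel hS
  have hbdd : ∀ᵐ t ∂volume, ‖cosKernel S t‖ ≤ volume.real S := .of_forall (abs_cosKernel_le hS)
  have hpos : Integrable fun t => max (f t) 0 * cosKernel S t :=
    hf.pos_part.mul_bdd hK.aestronglyMeasurable hbdd
  have hneg : Integrable fun t => max (-f t) 0 * cosKernel S t :=
    hf.neg.pos_part.mul_bdd hK.aestronglyMeasurable hbdd
  have hpos_le : ∫ t, max (f t) 0 * cosKernel S t ≤ volume.real S * ∫ t, max (f t) 0 := by
    rw [← integral_const_mul]
    refine integral_mono hpos (hf.pos_part.const_mul _) fun t => ?_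
    rw [mul_comm (volume.real S)]
    exact mul_le_mul_of_nonneg_left (cosKernel_le hS t) (le_max_right _ _)
  have hneg_eq : ∫ t, max (-f t) 0 * cosKernel S t
      = 2 * ∫ t in Ioc 0 A, max (-f t) 0 * cosKernel S t :=
    integral_eq_two_mul_setIntegral_Ioc_of_even (fun t => by rw [heven, cosKernel_neg])
      fun t ht => by rw [max_eq_right (neg_nonpos.2 (hsign t ht)), zero_mul]
  calc ∫ t, f t * cosKernel S t
      = (∫ t, max (f t) 0 * cosKernel S t) - ∫ t, max (-f t) 0 * cosKernel S t := by
        rw [← integral_sub hpos hneg]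
        simp_rw [← sub_mul, max_zero_sub_eq_self]
    _ ≤ _ := by rw [hneg_eq]; linarith

lemma setIntegral_le_posPartBound {f : ℝ → ℝ} {A : ℝ} {S : Set ℝ} (hf : Integrable f)
    (hself : ∀ x, 𝓕 (fun t : ℝ => (f t : ℂ)) x = f x) (heven : ∀ x, f (-x) = f x)
    (hf1 : ∀ x, -1 ≤ f x) (hsign : ∀ x, A < x → 0 ≤ f x)
    (hpos : ∫ t, max (f t) 0 = 1 / 2) (hneg : ∫ t in Ioc 0 A, max (-f t) 0 = 1 / 4)
    (hA : 1 / 4 ≤ A) (hA2 : A ≤ 1 / 2) (hS : MeasurableSet S) (hSA : S ⊆ Ioc 0 A) :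
    ∫ x in S, f x ≤ posPartBound A (volume.real S) := by
  have hSfin : volume S ≠ ⊤ := ((measure_mono hSA).trans_lt measure_Ioc_lt_top).ne
  have hmeas := (continuous_of_fourier_eq_self hf hself).measurable
  calc ∫ x in S, f x = ∫ t, f t * cosKernel S t :=
        setIntegral_eq_integral_mul_cosKernel_of_fourier_eq_self hf hself hSfin
    _ ≤ volume.real S / 2 - 2 * ∫ t in Ioc 0 A, max (-f t) 0 * cosKernel S t := by
        have h := integral_mul_cosKernel_le hf heven hsign hSfin
        rw [hpos] at h
        linarith
    _ ≤ volume.real S / 2 - 2 * ∫ t in Ioc (A - 1 / 4) A, cosKernel S t := by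
        gcongr
        exact setIntegral_Ioc_le_setIntegral_mul_of_antitoneOn (by norm_num) (by linarith)
          (by fun_prop) (fun x _ => max_neg_zero_mem_Icc (hf1 x)) hneg
          ((cosKernel_antitoneOn hS fun x hx => ⟨(hSA hx).1.le, (hSA hx).2.trans hA2⟩).mono
            (Icc_subset_Icc_right hA2))
    _ ≤ posPartBound A (volume.real S) := by
        rw [posPartBound]
        gcongr with t ht
        · exact integrableOn_cosKernel measure_Ioc_lt_top.ne measure_Ioc_lt_top.ne
        · exact integrableOn_cosKernel hSfin measure_Ioc_lt_top.ne
        · exact measurableSet_Ioc.nullMeasurableSet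
        · exact cosKernel_Ioc_le_cosKernel hS hSA (by linarith) hA2
            ⟨by linarith [ht.1], ht.2.trans hA2⟩

theorem stmt15_general (f : ℝ → ℝ) (hint : Integrable f)
    (hnorm : ∫ x : ℝ, |f x| = 1) (heven : ∀ x, f (-x) = f x) (hf0 : f 0 = 0)
    (hself : ∀ x : ℝ, 𝓕 (fun t : ℝ => (f t : ℂ)) x = (f x : ℂ))
    (A : ℝ) (hA0 : 0 ≤ A) (hA : sgnRadius f = ENNReal.ofReal A) (hA2 : A ≤ 1 / 2) :
    (∫ x in (0:ℝ)..A, max (f x) 0) ≤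
      ∫ x in (1/4 : ℝ)..A,
        (1 / 2 + (Real.sin (2 * π * (A - 1 / 4) * x) - Real.sin (2 * π * A * x)) / (π * x)) := by
  have hsign (x : ℝ) (hx : A < x) : 0 ≤ f x :=
    nonneg_of_sgnRadius_lt <| hA ▸ ENNReal.ofReal_lt_ofReal_iff'.2
      ⟨hx.trans_le (le_abs_self x), hA0.trans_lt (hx.trans_le (le_abs_self x))⟩
  have hf1 (x : ℝ) : -1 ≤ f x := by
    linarith [neg_abs_le (f x), hnorm ▸ abs_le_integral_abs_of_fourier_eq_self hself x]
  have hmean : ∫ t, f t = 0 := (integral_eq_apply_zero_of_fourier_eq_self hint hself).trans hf0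
  have hpos : ∫ t, max (f t) 0 = 1 / 2 := by
    rw [integral_max_zero_eq_half_of_integral_eq_zero hint hmean, hnorm]
  have hneg : ∫ x in Ioc 0 A, max (-f x) 0 = 1 / 4 := by
    have h := integral_eq_two_mul_setIntegral_Ioc_of_even (g := fun x => max (-f x) 0)
      (fun x => by simp only [heven]) fun x hx => max_eq_right (neg_nonpos.2 (hsign x hx))
    rw [integral_max_neg_zero_eq_half_of_integral_eq_zero hint hmean, hnorm] at h
    linarith
  have hmeas := (continuous_of_fourier_eq_self hint hself).measurable
  set E := {x ∈ Ioc 0 A | 0 < f x}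
  have hE : MeasurableSet E := measurableSet_Ioc.inter (measurableSet_lt measurable_const hmeas)
  have hm : volume.real E + 1 / 4 ≤ A := by
    simpa [hneg, volume_real_Ioc_of_le hA0] using measureReal_add_setIntegral_le (μ := volume)
      measurableSet_Ioc hE (sep_subset _ _) measure_Ioc_lt_top.ne
      (fun x _ => max_neg_zero_mem_Icc (hf1 x)) fun x hx => max_eq_right (neg_nonpos.2 hx.2.le)
  have hA4 : 1 / 4 ≤ A := by linarith [measureReal_nonneg (μ := volume) (s := E)]
  calc ∫ x in (0 : ℝ)..A, max (f x) 0 = ∫ x in E, f x :=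
        intervalIntegral_max_zero_eq_setIntegral hmeas hA0
    _ ≤ posPartBound A (volume.real E) :=
        setIntegral_le_posPartBound hint hself heven hf1 hsign hpos hneg hA4 hA2 hE (sep_subset _ _)
    _ ≤ posPartBound A (A - 1 / 4) := posPartBound_mono measureReal_nonneg (by linarith)
    _ = _ := (intervalIntegral_eq_posPartBound hA4).symm

theorem stmt15 (f : ℝ → ℝ) (hint : Integrable f) (hL2 : MemLp f 2 volume)
    (hnorm : ∫ x : ℝ, |f x| = 1) (heven : ∀ x, f (-x) = f x) (hf0 : f 0 = 0)
    (hself : ∀ x : ℝ, 𝓕 (fun t : ℝ => (f t : ℂ)) x = (f x : ℂ))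
    (A : ℝ) (hA0 : 0 ≤ A) (hA : sgnRadius f = ENNReal.ofReal A) (hA2 : A ≤ 1 / 2) :
    (∫ x in (0:ℝ)..A, max (f x) 0) ≤
      ∫ x in (1/4 : ℝ)..A,
        (1 / 2 + (Real.sin (2 * π * (A - 1 / 4) * x) - Real.sin (2 * π * A * x)) / (π * x)) :=
  stmt15_general f hint hnorm heven hf0 hself A hA0 hA hA2
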